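/- arXiv:2302.02432 — 3 statements merged into one kernel-verified Lean document; each statement's English description precedes it below -/
import Mathlib

section
/- Let U ~ Bernoulli(1/2) and let L be a random variable taking values in [-1,1], jointly distributed with U. Then |E[(-1)^U · L]| ≤ sqrt(2·I(L;U)), where I(L;U) is the mutual information between L and U measured in nats. -/
open MeasureTheory Real ENNReal
open scoped Classical

/-- Kullback–Leibler divergence (in nats): `∫ log (dμ/dν) dμ` when `μ ≪ ν` and the
log-likelihood ratio is integrable, and `∞` otherwise. -/

noncomputable def klDiv {α : Type*} [MeasurableSpace α] (μ ν : Measure α) : ℝ≥0∞ :=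
  if μ ≪ ν ∧ Integrable (llr μ ν) μ then ENNReal.ofReal (∫ x, llr μ ν x ∂μ) else ⊤

/-- Mutual information (in nats) between random variables `X` and `Y` on `(Ω, μ)`:
the KL divergence between the joint law and the product of the marginal laws. -/
noncomputable def mutualInfo {Ω α β : Type*} [MeasurableSpace Ω] [MeasurableSpace α]
    [MeasurableSpace β] (μ : Measure Ω) (X : Ω → α) (Y : Ω → β) : ℝ≥0∞ :=
  klDiv (μ.map fun ω => (X ω, Y ω)) ((μ.map X).prod (μ.map Y))

lemma my_sinh_le_mul_cosh {y : ℝ} (hy : 0 ≤ y) : Real.sinh y ≤ y * Real.cosh y := by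
  have hm : MonotoneOn (fun z : ℝ => z * Real.cosh z - Real.sinh z) (Set.Ici 0) := by
    apply monotoneOn_of_deriv_nonneg (convex_Ici 0)
    · exact ((continuous_id.mul Real.continuous_cosh).sub Real.continuous_sinh).continuousOn
    · exact ((differentiable_id.mul Real.differentiable_cosh).sub
        Real.differentiable_sinh).differentiableOn
    · intro x hx
      rw [interior_Ici] at hx
      have h1 : HasDerivAt (fun z : ℝ => z * Real.cosh z - Real.sinh z)
          (1 * Real.cosh x + x * Real.sinh x - Real.cosh x) x :=
        ((hasDerivAt_id x).mul (Real.hasDerivAt_cosh x)).sub (Real.hasDerivAt_sinh x)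
      rw [h1.deriv]
      have hx0 : (0:ℝ) ≤ x := le_of_lt hx
      nlinarith [Real.sinh_nonneg_iff.mpr hx0]
  have h := hm (Set.self_mem_Ici) (Set.mem_Ici.mpr hy) hy
  simp only [Real.cosh_zero, Real.sinh_zero, mul_one, zero_mul, sub_zero] at h
  linarith

lemma my_cosh_le_exp_sq (y : ℝ) : Real.cosh y ≤ Real.exp (y ^ 2 / 2) := by
  suffices h : ∀ z : ℝ, 0 ≤ z → Real.cosh z ≤ Real.exp (z ^ 2 / 2) by
    rcases le_total 0 y with hy | hy
    · exact h y hy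
    · have := h (-y) (by linarith)
      simpa [Real.cosh_neg, neg_sq] using this
  intro z hz
  have ha : AntitoneOn (fun x : ℝ => Real.cosh x * Real.exp (-(x ^ 2 / 2))) (Set.Ici 0) := by
    apply antitoneOn_of_deriv_nonpos (convex_Ici 0)
    · exact (Real.continuous_cosh.mul
        ((continuous_pow 2).div_const 2).neg.rexp).continuousOn
    · apply Differentiable.differentiableOn
      exact Real.differentiable_cosh.mul
        (((differentiable_pow 2).div_const 2).neg.exp)
    · intro x hx
      rw [interior_Ici] at hx
      have h2 : HasDerivAt (fun z : ℝ => -(z ^ 2 / 2)) (-x) x := by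
        have := ((hasDerivAt_pow 2 x).div_const 2).neg
        simp at this; exact this
      have h3 : HasDerivAt (fun z : ℝ => Real.exp (-(z ^ 2 / 2)))
          (Real.exp (-(x ^ 2 / 2)) * (-x)) x := h2.exp
      have h1 : HasDerivAt (fun z : ℝ => Real.cosh z * Real.exp (-(z ^ 2 / 2)))
          (Real.sinh x * Real.exp (-(x ^ 2 / 2)) +
            Real.cosh x * (Real.exp (-(x ^ 2 / 2)) * (-x))) x :=
        (Real.hasDerivAt_cosh x).mul h3
      rw [h1.deriv]
      have hx0 : (0:ℝ) ≤ x := le_of_lt hx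
      nlinarith [Real.exp_pos (-(x ^ 2 / 2)), my_sinh_le_mul_cosh hx0]
  have h := ha (Set.self_mem_Ici) (Set.mem_Ici.mpr hz) hz
  simp only [Real.cosh_zero, ne_eq, OfNat.ofNat_ne_zero, not_false_eq_true, zero_pow,
    zero_div, neg_zero, Real.exp_zero, one_mul, mul_one] at h
  rw [Real.exp_neg] at h
  rw [← div_le_one (Real.exp_pos _)]
  calc Real.cosh z / Real.exp (z ^ 2 / 2)
      = Real.cosh z * (Real.exp (z ^ 2 / 2))⁻¹ := div_eq_mul_inv _ _
    _ ≤ 1 := h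

lemma my_gibbs {α : Type*} [MeasurableSpace α] {μ ν : Measure α} [IsProbabilityMeasure μ]
    [IsProbabilityMeasure ν] (hμν : μ ≪ ν) (h_int : Integrable (llr μ ν) μ) :
    0 ≤ ∫ x, llr μ ν x ∂μ := by
  set g : α → ℝ≥0∞ := fun x => (μ.rnDeriv ν x)⁻¹ with hg
  have hgm : Measurable g := (Measure.measurable_rnDeriv μ ν).inv
  have hlint : ∫⁻ x, g x ∂μ ≤ 1 := by
    rw [← MeasureTheory.lintegral_rnDeriv_mul hμν hgm.aemeasurable]
    calc ∫⁻ x, μ.rnDeriv ν x * g x ∂ν ≤ ∫⁻ _, 1 ∂ν := by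
          refine lintegral_mono fun x => ?_
          rcases eq_or_ne (μ.rnDeriv ν x) 0 with h0 | h0
          · simp [hg, h0]
          rcases eq_or_ne (μ.rnDeriv ν x) ⊤ with ht | ht
          · simp [hg, ht]
          · rw [hg]; simp only []
            rw [ENNReal.mul_inv_cancel h0 ht]
      _ = 1 := by simp
  have hfin : ∀ᵐ x ∂μ, g x < ⊤ := by
    filter_upwards [Measure.rnDeriv_pos hμν] with x hx
    exact ENNReal.inv_lt_top.mpr hx
  have hInt2 : Integrable (fun x => (g x).toReal) μ :=
    integrable_toReal_of_lintegral_ne_top hgm.aemeasurable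
      (lt_of_le_of_lt hlint ENNReal.one_lt_top).ne
  have hval : ∫ x, (g x).toReal ∂μ ≤ 1 := by
    rw [integral_toReal hgm.aemeasurable hfin]
    calc (∫⁻ x, g x ∂μ).toReal ≤ (1 : ℝ≥0∞).toReal :=
          ENNReal.toReal_mono ENNReal.one_ne_top hlint
      _ = 1 := by simp
  have hptwise : ∀ᵐ x ∂μ, - llr μ ν x ≤ (g x).toReal - 1 := by
    filter_upwards [Measure.rnDeriv_pos hμν, hμν.ae_le (Measure.rnDeriv_lt_top μ ν)]
      with x hpos hlt
    have hq : 0 < (μ.rnDeriv ν x).toReal := ENNReal.toReal_pos hpos.ne' hlt.ne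
    have h1 : - llr μ ν x = Real.log ((μ.rnDeriv ν x).toReal)⁻¹ := by
      rw [llr, Real.log_inv]
    rw [h1, hg]
    have h2 : (((μ.rnDeriv ν x)⁻¹ : ℝ≥0∞)).toReal = ((μ.rnDeriv ν x).toReal)⁻¹ :=
      ENNReal.toReal_inv _
    rw [h2]
    exact Real.log_le_sub_one_of_pos (inv_pos.mpr hq)
  have hmono := integral_mono_ae h_int.neg (hInt2.sub (integrable_const 1)) hptwise
  simp only [Pi.neg_apply, Pi.sub_apply] at hmono
  rw [integral_neg, integral_sub hInt2 (integrable_const 1)] at hmono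
  simp only [integral_const, probReal_univ, ENNReal.toReal_one, smul_eq_mul, one_mul] at hmono
  linarith

lemma my_dv {α : Type*} [MeasurableSpace α] {μ ν : Measure α} [IsProbabilityMeasure μ]
    [IsProbabilityMeasure ν] (hμν : μ ≪ ν) (h_int : Integrable (llr μ ν) μ)
    {f : α → ℝ} (hfμ : Integrable f μ) (hfν : Integrable (fun x => Real.exp (f x)) ν) :
    ∫ x, f x ∂μ ≤ ∫ x, llr μ ν x ∂μ + Real.log (∫ x, Real.exp (f x) ∂ν) := by
  have hP : IsProbabilityMeasure (ν.tilted f) := isProbabilityMeasure_tilted hfν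
  have hac : μ ≪ ν.tilted f := hμν.trans (absolutelyContinuous_tilted hfν)
  have hint' : Integrable (llr μ (ν.tilted f)) μ :=
    integrable_llr_tilted_right hμν hfμ h_int hfν
  have h0 := my_gibbs hac hint'
  rw [integral_llr_tilted_right hμν hfμ hfν h_int] at h0
  linarith

lemma my_integral_binary {Ω : Type*} [MeasurableSpace Ω] (μ : Measure Ω) [IsProbabilityMeasure μ]
    {U : Ω → ℕ} (hU : Measurable U) (hU01 : ∀ ω, U ω = 0 ∨ U ω = 1)
    (hUnif : μ {ω | U ω = 0} = 1 / 2) (g : ℕ → ℝ) :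
    ∫ u, g u ∂(μ.map U) = (g 0 + g 1) / 2 := by
  rw [integral_map hU.aemeasurable measurable_from_top.aestronglyMeasurable]
  have hfun : (fun ω => g (U ω)) =
      fun ω => Set.indicator {ω | U ω = 0} (fun _ => g 0 - g 1) ω + g 1 := by
    funext ω
    rcases hU01 ω with h | h
    · rw [Set.indicator_of_mem (by simpa using h)]
      rw [h]; ring
    · rw [Set.indicator_of_notMem (by simp [h])]
      rw [h]; ring
  rw [hfun]
  have hms : MeasurableSet {ω | U ω = 0} := hU (measurableSet_singleton 0)
  rw [integral_add ((integrable_const (g 0 - g 1)).indicator hms) (integrable_const (g 1)),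
    integral_indicator_const _ hms, integral_const, measureReal_def, hUnif]
  simp only [probReal_univ, ENNReal.toReal_one, smul_eq_mul, one_mul]
  have : ((1 : ℝ≥0∞) / 2).toReal = (1 : ℝ) / 2 := by
    rw [ENNReal.toReal_div]; norm_num
  rw [this]; ring

/-- If `U ~ Bernoulli(1/2)` and `L` takes values in `[-1, 1]`, then
`|E[(-1) ^ U * L]| ≤ sqrt (2 * I(L; U))`. -/
theorem abs_expectation_le_sqrt_two_mutualInfo {Ω : Type*} [MeasurableSpace Ω]
    (μ : Measure Ω) [IsProbabilityMeasure μ] (U : Ω → ℕ) (L : Ω → ℝ)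
    (hU : Measurable U) (hL : Measurable L)
    (hU01 : ∀ ω, U ω = 0 ∨ U ω = 1) (hUnif : μ {ω | U ω = 0} = 1 / 2)
    (hLbdd : ∀ ω, L ω ∈ Set.Icc (-1 : ℝ) 1) :
    ENNReal.ofReal |∫ ω, (-1 : ℝ) ^ (U ω) * L ω ∂μ| ≤
      (2 * mutualInfo μ L U) ^ (1 / 2 : ℝ) := by
  have hLabs : ∀ ω, |L ω| ≤ 1 := fun ω => abs_le.mpr ⟨(hLbdd ω).1, (hLbdd ω).2⟩
  set P : Measure (ℝ × ℕ) := μ.map (fun ω => (L ω, U ω)) with hPd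
  set R : Measure (ℝ × ℕ) := (μ.map L).prod (μ.map U) with hRd
  have hpair : Measurable fun ω => (L ω, U ω) := hL.prodMk hU
  haveI : IsProbabilityMeasure P := Measure.isProbabilityMeasure_map hpair.aemeasurable
  haveI : IsProbabilityMeasure (μ.map L) := Measure.isProbabilityMeasure_map hL.aemeasurable
  haveI : IsProbabilityMeasure (μ.map U) := Measure.isProbabilityMeasure_map hU.aemeasurable
  haveI : IsProbabilityMeasure R := by rw [hRd]; infer_instance
  set f : ℝ × ℕ → ℝ := fun p => (-1 : ℝ) ^ p.2 * p.1 with hfdef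
  have hfm : Measurable f :=
    ((measurable_from_top (f := fun n : ℕ => ((-1 : ℝ)) ^ n)).comp measurable_snd).mul
      measurable_fst
  have habs : ∀ p : ℝ × ℕ, |f p| = |p.1| := by
    intro p
    rw [hfdef]
    simp [abs_mul, abs_pow]
  have hmi : mutualInfo μ L U = klDiv P R := rfl
  have hE : ∫ x, f x ∂P = ∫ ω, (-1 : ℝ) ^ (U ω) * L ω ∂μ := by
    rw [hPd, integral_map hpair.aemeasurable hfm.aestronglyMeasurable]
  have hPae : ∀ᵐ x ∂P, |f x| ≤ 1 := by
    rw [hPd, ae_map_iff hpair.aemeasurable (measurableSet_le hfm.abs measurable_const)]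
    exact Filter.Eventually.of_forall fun ω => by rw [habs]; exact hLabs ω
  have hLae : ∀ᵐ x ∂(μ.map L), |x| ≤ 1 := by
    rw [ae_map_iff hL.aemeasurable (measurableSet_le measurable_abs measurable_const)]
    exact Filter.Eventually.of_forall hLabs
  have hRae : ∀ᵐ x ∂ R, |f x| ≤ 1 := by
    rw [ae_iff]
    have hsub : {x : ℝ × ℕ | ¬ |f x| ≤ 1} ⊆ {x : ℝ | ¬ |x| ≤ 1} ×ˢ Set.univ := by
      intro p hp
      simp only [Set.mem_setOf_eq, habs p] at hp
      exact ⟨hp, trivial⟩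
    refine measure_mono_null hsub ?_
    rw [hRd, Measure.prod_prod]
    have hmapL0 : μ.map L {x : ℝ | ¬ |x| ≤ 1} = 0 := by
      rw [ae_iff] at hLae
      exact hLae
    rw [hmapL0, zero_mul]
  have hint_f : Integrable f P := by
    refine Integrable.mono' (integrable_const 1) hfm.aestronglyMeasurable ?_
    filter_upwards [hPae] with x hx
    rwa [Real.norm_eq_abs]
  by_cases hc : P ≪ R ∧ Integrable (llr P R) P
  · obtain ⟨hac, hillr⟩ := hc
    rw [hmi, klDiv, if_pos ⟨hac, hillr⟩]
    set K : ℝ := ∫ x, llr P R x ∂P with hK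
    set E0 : ℝ := ∫ ω, (-1 : ℝ) ^ (U ω) * L ω ∂μ with hE0
    have key : ∀ t : ℝ, t * E0 ≤ K + t ^ 2 / 2 := by
      intro t
      have h1 : Integrable (fun x => t * f x) P := hint_f.const_mul t
      have h2 : Integrable (fun x => Real.exp (t * f x)) R := by
        refine Integrable.mono' (integrable_const (Real.exp |t|))
          (Real.measurable_exp.comp (hfm.const_mul t)).aestronglyMeasurable ?_
        filter_upwards [hRae] with x hx
        rw [Real.norm_eq_abs, abs_of_pos (Real.exp_pos _)]
        apply Real.exp_le_exp.mpr
        calc t * f x ≤ |t * f x| := le_abs_self _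
          _ = |t| * |f x| := abs_mul _ _
          _ ≤ |t| * 1 := mul_le_mul_of_nonneg_left hx (abs_nonneg t)
          _ = |t| := mul_one _
      have hdv := my_dv hac hillr h1 h2
      rw [integral_const_mul, hE] at hdv
      have hZpos : 0 < ∫ x, Real.exp (t * f x) ∂ R := integral_exp_pos h2
      have hboundL : ∀ x : ℝ, |x| ≤ 1 → Real.cosh (t * x) ≤ Real.exp (t ^ 2 / 2) := by
        intro x hx
        calc Real.cosh (t * x) ≤ Real.exp ((t * x) ^ 2 / 2) := my_cosh_le_exp_sq _
          _ ≤ Real.exp (t ^ 2 / 2) := by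
              apply Real.exp_le_exp.mpr
              have hx2 : x ^ 2 ≤ 1 := by nlinarith [abs_nonneg x, sq_abs x]
              nlinarith [sq_nonneg t]
      have hZle : ∫ x, Real.exp (t * f x) ∂ R ≤ Real.exp (t ^ 2 / 2) := by
        rw [hRd] at h2 ⊢
        rw [integral_prod _ h2]
        have hinner : ∀ x : ℝ,
            ∫ u, Real.exp (t * f (x, u)) ∂(μ.map U) = Real.cosh (t * x) := by
          intro x
          rw [my_integral_binary μ hU hU01 hUnif (fun u => Real.exp (t * f (x, u)))]
          rw [Real.cosh_eq, hfdef]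
          norm_num

        simp only [hinner]
        have hintc : Integrable (fun x => Real.cosh (t * x)) (μ.map L) := by
          refine Integrable.mono' (integrable_const (Real.exp (t ^ 2 / 2)))
            (Real.continuous_cosh.comp (continuous_const.mul continuous_id)).measurable.aestronglyMeasurable ?_
          filter_upwards [hLae] with x hx
          rw [Real.norm_eq_abs, abs_of_pos (Real.cosh_pos _)]
          exact hboundL x hx
        calc ∫ x, Real.cosh (t * x) ∂(μ.map L)
            ≤ ∫ _, Real.exp (t ^ 2 / 2) ∂(μ.map L) := by
              refine integral_mono_ae hintc (integrable_const _) ?_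
              filter_upwards [hLae] with x hx
              exact hboundL x hx
          _ = Real.exp (t ^ 2 / 2) := by simp
      have hlog : Real.log (∫ x, Real.exp (t * f x) ∂ R) ≤ t ^ 2 / 2 :=
        (Real.log_le_iff_le_exp hZpos).mpr hZle
      linarith
    have key' : ∀ t : ℝ, 0 ≤ t → t * |E0| ≤ K + t ^ 2 / 2 := by
      intro t ht
      rcases abs_cases E0 with ⟨h, _⟩ | ⟨h, _⟩
      · rw [h]; exact key t
      · rw [h]
        have := key (-t)
        nlinarith
    set K' : ℝ := max K 0 with hK'
    have hK'0 : (0 : ℝ) ≤ K' := le_max_right _ _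
    have habs_le : |E0| ≤ Real.sqrt (2 * K') := by
      rcases le_or_gt K 0 with hKle | hKpos
      · have h := key' |E0| (abs_nonneg _)
        have he0 : |E0| ≤ 0 := by nlinarith [abs_nonneg E0]
        exact le_trans he0 (Real.sqrt_nonneg _)
      · have hKK : K' = K := max_eq_left hKpos.le
        set s : ℝ := Real.sqrt (2 * K) with hs
        have hs2 : s ^ 2 = 2 * K := Real.sq_sqrt (by linarith)
        have hspos : 0 < s := Real.sqrt_pos.mpr (by linarith)
        have h := key' s hspos.le
        have hss : s * |E0| ≤ s * s := by nlinarith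
        have := le_of_mul_le_mul_left hss hspos
        rw [hKK]
        exact this
    have hofK : ENNReal.ofReal K = ENNReal.ofReal K' := by
      rcases le_total K 0 with h | h
      · rw [ENNReal.ofReal_of_nonpos h, hK', max_eq_right h, ENNReal.ofReal_zero]
      · rw [hK', max_eq_left h]
    rw [hofK]
    have h2K : (2 : ℝ≥0∞) * ENNReal.ofReal K' = ENNReal.ofReal (2 * K') := by
      rw [ENNReal.ofReal_mul (by norm_num)]
      norm_num
    rw [h2K, ENNReal.ofReal_rpow_of_nonneg (by linarith) (by norm_num)]
    apply ENNReal.ofReal_le_ofReal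
    rw [← Real.sqrt_eq_rpow]
    exact habs_le
  · rw [hmi, klDiv, if_neg hc]
    have htop : (2 : ℝ≥0∞) * ⊤ = ⊤ := by simp
    rw [htop, ENNReal.top_rpow_of_pos (by norm_num)]
    exact le_top
end

section
/- Let C₁ > 0, C₂ > 0 satisfy exp(−2·C₂·(C₁+1)) + exp(2·C₂) ≤ 2. Let U ~ Bernoulli(1/2), L ∈ [0,1] a random variable jointly distributed with U, and set ε̃ = (−1)^{1−U} − C₁/(C₁+2). Then (C₁+2)·E[ε̃·L] ≤ I(L;U)/C₂. -/
open MeasureTheory Real ENNReal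
open scoped Classical

lemma young_exp {y a : ℝ} (hy : 0 ≤ y) : y * a ≤ y * Real.log y - y + Real.exp a := by
  rcases eq_or_lt_of_le hy with h | h
  · simp [← h, (Real.exp_pos a).le]
  · have h1 : a - Real.log y + 1 ≤ Real.exp (a - Real.log y) := Real.add_one_le_exp _
    have h2 : Real.exp (a - Real.log y) = Real.exp a / y := by
      rw [Real.exp_sub, Real.exp_log h]
    rw [h2] at h1
    have h3 : y * (a - Real.log y + 1) ≤ y * (Real.exp a / y) :=
      mul_le_mul_of_nonneg_left h1 hy
    rw [mul_div_cancel₀ _ h.ne'] at h3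
    nlinarith

lemma dv_lite {α : Type*} [MeasurableSpace α] (μ ν : Measure α) [IsProbabilityMeasure μ]
    [SigmaFinite ν] (hac : μ ≪ ν) (hllr : Integrable (llr μ ν) μ) {f : α → ℝ}
    (hf : Integrable f μ) (hef : Integrable (fun x => Real.exp (f x)) ν)
    (hef1 : ∫ x, Real.exp (f x) ∂ν ≤ 1) :
    ∫ x, f x ∂μ ≤ ∫ x, llr μ ν x ∂μ := by
  set g : α → ℝ := fun x => (μ.rnDeriv ν x).toReal with hg
  have hg_nonneg : ∀ x, 0 ≤ g x := fun x => ENNReal.toReal_nonneg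
  have hg_int : Integrable g ν := Measure.integrable_toReal_rnDeriv
  have h1 : ∫ x, f x ∂μ = ∫ x, g x * f x ∂ν := by
    rw [← integral_rnDeriv_smul hac]; simp [hg]
  have h2 : ∫ x, llr μ ν x ∂μ = ∫ x, g x * Real.log (g x) ∂ν := by
    rw [← integral_rnDeriv_smul hac]; simp [hg, llr]
  have h3 : Integrable (fun x => g x * f x) ν := by
    have := (integrable_rnDeriv_smul_iff (f := f) hac).mpr hf
    simpa [hg] using this
  have h4 : Integrable (fun x => g x * Real.log (g x)) ν := by
    have := (integrable_rnDeriv_smul_iff (f := llr μ ν) hac).mpr hllr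
    simpa [hg, llr] using this
  have h5 : ∫ x, g x ∂ν = 1 := by
    rw [hg, Measure.integral_toReal_rnDeriv hac]; simp
  have hmono : ∫ x, g x * f x ∂ν ≤ ∫ x, (g x * Real.log (g x) - g x + Real.exp (f x)) ∂ν := by
    refine integral_mono h3 ((h4.sub hg_int).add hef) ?_
    intro x
    exact young_exp (hg_nonneg x)
  have hs1 : Integrable (fun x => g x * Real.log (g x) - g x) ν := h4.sub hg_int
  rw [integral_add (f := fun x => g x * Real.log (g x) - g x)
      (g := fun x => Real.exp (f x)) hs1 hef,
    integral_sub (f := fun x => g x * Real.log (g x)) (g := g) h4 hg_int, h5] at hmono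
  rw [h1, h2]; linarith

/-- If `C₁, C₂ > 0` satisfy `exp(-2C₂(C₁+1)) + exp(2C₂) ≤ 2`, `U ~ Bernoulli(1/2)` and
`L ∈ [0,1]`, then with `ε̃ = (-1)^{1-U} - C₁/(C₁+2)` one has
`(C₁+2) E[ε̃ L] ≤ I(L;U)/C₂` (mutual information in nats). -/
theorem weighted_error_mutualInfo_bound {Ω : Type*} [MeasurableSpace Ω] (μ : Measure Ω)
    [IsProbabilityMeasure μ] (C₁ C₂ : ℝ) (hC₁ : 0 < C₁) (hC₂ : 0 < C₂)
    (hcond : Real.exp (-2 * C₂ * (C₁ + 1)) + Real.exp (2 * C₂) ≤ 2)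
    (U : Ω → ℕ) (L : Ω → ℝ) (hU : Measurable U) (hL : Measurable L)
    (hU01 : ∀ ω, U ω = 0 ∨ U ω = 1) (hBern : μ {ω | U ω = 0} = 1 / 2)
    (hLbdd : ∀ ω, L ω ∈ Set.Icc (0 : ℝ) 1) :
    ENNReal.ofReal ((C₁ + 2) *
        ∫ ω, ((-1 : ℝ) ^ (1 - U ω) - C₁ / (C₁ + 2)) * L ω ∂μ) ≤
      mutualInfo μ L U / ENNReal.ofReal C₂ := by
  have hC12 : (0:ℝ) < C₁ + 2 := by linarith
  set c : ℝ := C₁ / (C₁ + 2) with hc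
  have hc0 : 0 ≤ c := by positivity
  have hc1 : c ≤ 1 := by rw [hc, div_le_one hC12]; linarith
  set f : ℝ × ℕ → ℝ := fun p => C₂ * ((C₁ + 2) * (((-1:ℝ) ^ (1 - p.2) - c) * p.1)) with hfdef
  have hfmeas : Measurable f := by
    apply Measurable.const_mul
    apply Measurable.const_mul
    exact (((measurable_from_nat (f := fun n : ℕ => ((-1:ℝ) ^ (1 - n)))).comp
      measurable_snd).sub measurable_const).mul measurable_fst
  set κ : Measure (ℝ × ℕ) := μ.map (fun ω => (L ω, U ω)) with hκ
  set ρ : Measure (ℝ × ℕ) := (μ.map L).prod (μ.map U) with hρ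
  have hLU : Measurable fun ω => (L ω, U ω) := hL.prodMk hU
  haveI : IsProbabilityMeasure κ := Measure.isProbabilityMeasure_map hLU.aemeasurable
  haveI : IsProbabilityMeasure (μ.map L) := Measure.isProbabilityMeasure_map hL.aemeasurable
  haveI : IsProbabilityMeasure (μ.map U) := Measure.isProbabilityMeasure_map hU.aemeasurable
  have haeL : ∀ᵐ x ∂(μ.map L), x ∈ Set.Icc (0:ℝ) 1 :=
    (ae_map_iff hL.aemeasurable measurableSet_Icc).mpr (ae_of_all _ hLbdd)
  have haeκ : ∀ᵐ p : ℝ × ℕ ∂κ, p.1 ∈ Set.Icc (0:ℝ) 1 := by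
    rw [hκ]
    exact (ae_map_iff hLU.aemeasurable (measurable_fst measurableSet_Icc)).mpr
      (ae_of_all _ hLbdd)
  have haeρ : ∀ᵐ p : ℝ × ℕ ∂ρ, p.1 ∈ Set.Icc (0:ℝ) 1 := by
    rw [ae_iff]
    have hset : {p : ℝ × ℕ | ¬ p.1 ∈ Set.Icc (0:ℝ) 1} =
        {x : ℝ | ¬ x ∈ Set.Icc (0:ℝ) 1} ×ˢ (Set.univ : Set ℕ) := by
      ext p; simp
    rw [hset, hρ, Measure.prod_prod, ae_iff.mp haeL, zero_mul]
  -- pointwise bound on the sign term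
  have hε : ∀ n : ℕ, |((-1:ℝ) ^ (1 - n) - c)| ≤ 2 := by
    intro n
    rcases Nat.even_or_odd (1 - n) with h | h
    · rw [h.neg_one_pow]; rw [abs_le]; constructor <;> linarith
    · rw [h.neg_one_pow]; rw [abs_le]; constructor <;> linarith
  have hfb : ∀ p : ℝ × ℕ, p.1 ∈ Set.Icc (0:ℝ) 1 → ‖f p‖ ≤ C₂ * ((C₁ + 2) * 2) := by
    intro p hp
    rw [hfdef]
    simp only [Real.norm_eq_abs, abs_mul]
    rw [abs_of_pos hC₂, abs_of_pos hC12]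
    have h1 := hε p.2
    have h2 : |p.1| ≤ 1 := abs_le.2 ⟨by linarith [hp.1], hp.2⟩
    have h3 : |(-1:ℝ) ^ (1 - p.2) - c| * |p.1| ≤ 2 * 1 :=
      mul_le_mul h1 h2 (abs_nonneg _) (by norm_num)
    have h4 : |(-1:ℝ) ^ (1 - p.2) - c| * |p.1| ≤ 2 := by linarith
    exact mul_le_mul_of_nonneg_left
      (mul_le_mul_of_nonneg_left (by linarith) hC12.le) hC₂.le
  have hfint : Integrable f κ :=
    ⟨hfmeas.aestronglyMeasurable,
      HasFiniteIntegral.of_bounded (C := C₂ * ((C₁ + 2) * 2))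
        (by filter_upwards [haeκ] with p hp using hfb p hp)⟩
  have hefint : Integrable (fun p => Real.exp (f p)) ρ := by
    refine ⟨(Real.measurable_exp.comp hfmeas).aestronglyMeasurable,
      HasFiniteIntegral.of_bounded (C := Real.exp (C₂ * ((C₁ + 2) * 2))) ?_⟩
    filter_upwards [haeρ] with p hp
    rw [Real.norm_eq_abs, abs_of_pos (Real.exp_pos _)]
    exact Real.exp_le_exp.2 (le_trans (le_abs_self _)
      (by simpa [Real.norm_eq_abs] using hfb p hp))
  -- inner integral bound
  have hinner : ∀ x : ℝ, x ∈ Set.Icc (0:ℝ) 1 →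
      ∫ u, Real.exp (f (x, u)) ∂(μ.map U) ≤ 1 := by
    intro x hx
    have hgm : Measurable fun u : ℕ => Real.exp (f (x, u)) := measurable_from_nat
    rw [integral_map hU.aemeasurable hgm.aestronglyMeasurable]
    set A : ℝ := Real.exp (-2 * C₂ * (C₁ + 1) * x) with hA
    set B : ℝ := Real.exp (2 * C₂ * x) with hB
    have hval : (fun ω => Real.exp (f (x, U ω))) =
        fun ω => B + Set.indicator {ω | U ω = 0} (fun _ => A - B) ω := by
      funext ω
      rcases hU01 ω with h | h
      · have hmem : ω ∈ {ω | U ω = 0} := h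
        rw [Set.indicator_of_mem hmem]
        have hexp : f (x, 0) = -2 * C₂ * (C₁ + 1) * x := by
          simp only [hfdef, hc, pow_one, Nat.sub_zero]
          field_simp
          ring
        rw [h]
        rw [hexp]
        rw [hA]; ring
      · have hmem : ω ∉ {ω | U ω = 0} := by simp [h]
        rw [Set.indicator_of_notMem hmem]
        have hexp : f (x, 1) = 2 * C₂ * x := by
          simp only [hfdef, hc, Nat.sub_self, pow_zero]
          field_simp
          ring
        rw [h, hexp, hB]; ring
    rw [hval]
    have hms : MeasurableSet {ω | U ω = 0} := hU (measurableSet_singleton 0)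
    have hindint : Integrable (Set.indicator {ω | U ω = 0} (fun _ => A - B)) μ :=
      (integrable_const (A - B)).indicator hms
    rw [integral_add (integrable_const B) hindint, integral_const,
      integral_indicator_const _ hms]
    have hμs : μ.real {ω | U ω = 0} = 1 / 2 := by
      rw [measureReal_def, hBern]
      simp [ENNReal.toReal_div]
    rw [hμs]
    simp only [probReal_univ, one_mul, smul_eq_mul]
    -- convexity bounds
    have hconv : ∀ a : ℝ, Real.exp (a * x) ≤ (1 - x) + x * Real.exp a := by
      intro a
      have h := convexOn_exp.2 (Set.mem_univ (0:ℝ)) (Set.mem_univ a)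
        (by linarith [hx.2] : (0:ℝ) ≤ 1 - x) hx.1 (by ring)
      simp only [smul_eq_mul, mul_zero, zero_add, Real.exp_zero, mul_one] at h
      rw [mul_comm a x]
      linarith [h]
    have hA' : A ≤ (1 - x) + x * Real.exp (-2 * C₂ * (C₁ + 1)) := by
      rw [hA, show (-2 * C₂ * (C₁ + 1) * x) = (-2 * C₂ * (C₁ + 1)) * x from rfl]
      exact hconv _
    have hB' : B ≤ (1 - x) + x * Real.exp (2 * C₂) := by
      rw [hB, show (2 * C₂ * x) = (2 * C₂) * x from rfl]
      exact hconv _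
    nlinarith [hx.1, hcond]
  -- the exponential moment bound over ρ
  have hef1 : ∫ p, Real.exp (f p) ∂ρ ≤ 1 := by
    have heq : ∫ p, Real.exp (f p) ∂ρ
        = ∫ x, ∫ u, Real.exp (f (x, u)) ∂(μ.map U) ∂(μ.map L) := by
      rw [hρ]
      exact integral_prod _ (by rwa [← hρ])
    rw [heq]
    calc ∫ x, ∫ u, Real.exp (f (x, u)) ∂(μ.map U) ∂(μ.map L)
        ≤ ∫ _ , (1:ℝ) ∂(μ.map L) := by
          refine integral_mono_ae ?_ (integrable_const 1) ?_
          · have := hefint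
            rw [hρ] at this
            exact this.integral_prod_left
          · filter_upwards [haeL] with x hx using hinner x hx
      _ = 1 := by simp
  -- identify ∫ f dκ with the target expectation
  have hmap : ∫ p, f p ∂κ =
      C₂ * ((C₁ + 2) * ∫ ω, ((-1:ℝ) ^ (1 - U ω) - c) * L ω ∂μ) := by
    rw [hκ, integral_map hLU.aemeasurable hfmeas.aestronglyMeasurable]
    simp only [hfdef]
    rw [integral_const_mul]
    congr 1
    rw [integral_const_mul]
  -- conclude
  simp only [mutualInfo, klDiv]
  rw [← hκ, ← hρ]
  split_ifs with h
  · obtain ⟨hac, hllr⟩ := h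
    have hdv : ∫ p, f p ∂κ ≤ ∫ p, llr κ ρ p ∂κ := dv_lite κ ρ hac hllr hfint hefint hef1
    rw [hmap] at hdv
    have hreal : (C₁ + 2) * ∫ ω, ((-1:ℝ) ^ (1 - U ω) - c) * L ω ∂μ ≤
        (∫ p, llr κ ρ p ∂κ) / C₂ := by
      rw [le_div_iff₀ hC₂, mul_comm]
      linarith
    calc ENNReal.ofReal ((C₁ + 2) * ∫ ω, ((-1:ℝ) ^ (1 - U ω) - c) * L ω ∂μ)
        ≤ ENNReal.ofReal ((∫ p, llr κ ρ p ∂κ) / C₂) := ENNReal.ofReal_le_ofReal hreal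
      _ = ENNReal.ofReal (∫ p, llr κ ρ p ∂κ) / ENNReal.ofReal C₂ :=
          ENNReal.ofReal_div_of_pos hC₂
  · rw [ENNReal.top_div]
    simp [ENNReal.ofReal_ne_top]
end

section
/- Let U ~ Bernoulli(1/2), ℓ ∈ [0,1] fixed, C₁ > 0, and t > 0 with exp(2t) + exp(−2t(C₁+1)) ≤ 2. Define ε̃' = (−1)^{1−U} − C₁/(C₁+2). Then E_U[exp(t·(C₁+2)·ε̃'·ℓ)] ≤ 1. -/
open MeasureTheory Real

lemma exp_mul_le_of_mem_Icc (c : ℝ) {ℓ : ℝ} (hℓ : ℓ ∈ Set.Icc (0 : ℝ) 1) :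
    Real.exp (c * ℓ) ≤ (1 - ℓ) + ℓ * Real.exp c := by
  obtain ⟨h0, h1⟩ := hℓ
  have := convexOn_exp.2 (Set.mem_univ (0 : ℝ)) (Set.mem_univ c)
    (by linarith : (0:ℝ) ≤ 1 - ℓ) h0 (by ring)
  simpa [smul_eq_mul, mul_comm] using this

/-- For `U ~ Bernoulli(1/2)`, fixed `ℓ ∈ [0,1]`, `C₁ > 0` and `t > 0` with
`exp(2t) + exp(-2t(C₁+1)) ≤ 2`, setting `ε̃' = (-1)^{1-U} - C₁/(C₁+2)` one has
`E[exp (t (C₁+2) ε̃' ℓ)] ≤ 1`. -/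
theorem shifted_rademacher_mgf_le_one {Ω : Type*} [MeasurableSpace Ω] (μ : Measure Ω)
    [IsProbabilityMeasure μ] (U : Ω → ℕ) (hU : Measurable U)
    (hU01 : ∀ ω, U ω = 0 ∨ U ω = 1) (hBern : μ {ω | U ω = 0} = 1 / 2)
    (ℓ : ℝ) (hℓ : ℓ ∈ Set.Icc (0 : ℝ) 1) (C₁ t : ℝ) (hC₁ : 0 < C₁) (ht : 0 < t)
    (hcond : Real.exp (2 * t) + Real.exp (-2 * t * (C₁ + 1)) ≤ 2) :
    ∫ ω, Real.exp (t * (C₁ + 2) * ((-1 : ℝ) ^ (1 - U ω) - C₁ / (C₁ + 2)) * ℓ) ∂μ ≤ 1 := by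
  have hC2 : (C₁ + 2) ≠ 0 := by positivity
  set A : ℝ := Real.exp (-2 * t * (C₁ + 1) * ℓ) with hA
  set B : ℝ := Real.exp (2 * t * ℓ) with hB
  set s : Set Ω := {ω | U ω = 0} with hs
  have hms : MeasurableSet s := hU (measurableSet_singleton 0)
  have hfeq : ∀ ω, Real.exp (t * (C₁ + 2) * ((-1 : ℝ) ^ (1 - U ω) - C₁ / (C₁ + 2)) * ℓ)
      = s.indicator (fun _ => A) ω + sᶜ.indicator (fun _ => B) ω := by
    intro ω
    rcases hU01 ω with h | h
    · have : ω ∈ s := h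
      simp only [Set.indicator_of_mem this, Set.indicator_of_notMem (by simpa using this : ω ∉ sᶜ)]
      rw [h]
      simp only [pow_one, add_zero]
      congr 1
      field_simp
      ring
    · have hns : ω ∉ s := by simp [hs, h]
      simp only [Set.indicator_of_notMem hns, Set.indicator_of_mem (by simpa using hns : ω ∈ sᶜ)]
      rw [h]
      simp only [pow_zero, zero_add]
      congr 1
      field_simp
      ring
  have hμs : (μ s).toReal = 1 / 2 := by
    rw [hBern]; simp [ENNReal.toReal_div]
  have hμsc : (μ sᶜ).toReal = 1 / 2 := by
    rw [prob_compl_eq_one_sub hms, hBern]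
    rw [ENNReal.toReal_sub_of_le (by norm_num) (by norm_num)]
    norm_num [ENNReal.toReal_div]
  calc ∫ ω, Real.exp (t * (C₁ + 2) * ((-1 : ℝ) ^ (1 - U ω) - C₁ / (C₁ + 2)) * ℓ) ∂μ
      = ∫ ω, (s.indicator (fun _ => A) ω + sᶜ.indicator (fun _ => B) ω) ∂μ := by
        exact integral_congr_ae (Filter.Eventually.of_forall hfeq)
    _ = (μ s).toReal • A + (μ sᶜ).toReal • B := by
        rw [integral_add ((integrable_const A).indicator hms)
          ((integrable_const B).indicator hms.compl)]
        rw [integral_indicator_const _ hms, integral_indicator_const _ hms.compl]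
        rfl
    _ = (A + B) / 2 := by rw [hμs, hμsc]; simp [smul_eq_mul]; ring
    _ ≤ 1 := by
        have h1 : A ≤ (1 - ℓ) + ℓ * Real.exp (-2 * t * (C₁ + 1)) :=
          exp_mul_le_of_mem_Icc _ hℓ
        have h2 : B ≤ (1 - ℓ) + ℓ * Real.exp (2 * t) := exp_mul_le_of_mem_Icc _ hℓ
        have hℓ0 := hℓ.1
        nlinarith [hℓ.1, hℓ.2]
end
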